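/- arXiv:1704.01893 — 2 statements merged into one kernel-verified Lean document; each statement's English description precedes it below -/
import Mathlib

section
/- Let t ≥ 0, K, L ≥ t+1, and ε with max{K,L}(t+1) ≤ ε ≤ KL. The number N of K×L binary matrices of total weight ε in which every row and every column has weight at least t+1 satisfies N ≤ C(min{K,L}, t+1)^{max{K,L}} · C(K·L - max{K,L}(t+1), ε - max{K,L}(t+1)). -/
/-!
Choose, in each of the `max K L` longer lines, `t + 1` of its ones: there are at most
`C(min K L, t + 1) ^ max K L` such choices, and they fix `max K L * (t + 1)` positions.
The pattern is then a superset of these positions of size `ε`, and there are at most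
`C(K * L - max K L * (t + 1), ε - max K L * (t + 1))` of those. Summing over the choices gives
the bound; the shorter dimension is reduced to the longer one by transposing.
-/

open Finset Fintype

theorem card_filter_superset_card_eq_le {γ : Type*} [Fintype γ] [DecidableEq γ]
    (A : Finset γ) (ε : ℕ) :
    #{S : Finset γ | A ⊆ S ∧ #S = ε} ≤ (card γ - #A).choose (ε - #A) := by
  rw [← card_compl, ← card_powersetCard]
  refine card_le_card_of_injOn (· \ A) (fun S hS => ?_) (fun S hS S' hS' h => ?_)
  · obtain ⟨hAS, rfl⟩ := (mem_filter.mp hS).2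
    rw [mem_coe, mem_powersetCard, card_sdiff_of_subset hAS]
    exact ⟨fun x hx => mem_compl.mpr (mem_sdiff.mp hx).2, rfl⟩
  · rw [← sdiff_union_of_subset (mem_filter.mp hS).2.1,
      ← sdiff_union_of_subset (mem_filter.mp hS').2.1]
    exact congrArg (· ∪ A) h

variable {α β : Type*} [Fintype α] [Fintype β]

def rowPositions [DecidableEq β] (f : α → Finset β) : Finset (α × β) := {p | p.2 ∈ f p.1}

theorem card_rowPositions [DecidableEq β] (f : α → Finset β) :
    #(rowPositions f) = ∑ a, #(f a) := by
  rw [rowPositions, card_filter, Fintype.sum_prod_type]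
  simp

theorem card_filter_row_weight_le [DecidableEq α] [DecidableEq β] (t ε : ℕ) :
    #{S : Finset (α × β) | #S = ε ∧ ∀ a, t + 1 ≤ #{b | (a, b) ∈ S}} ≤
      (card β).choose (t + 1) ^ card α *
        (card α * card β - card α * (t + 1)).choose (ε - card α * (t + 1)) := by
  set F := piFinset fun _ : α => powersetCard (t + 1) (univ : Finset β)
  calc _ ≤ #(F.biUnion fun f => {S | rowPositions f ⊆ S ∧ #S = ε}) := by
        refine card_le_card fun S hS => ?_
        obtain ⟨hcard, hrow⟩ := (mem_filter.mp hS).2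
        choose f hfS hf using fun a => exists_subset_card_eq (hrow a)
        refine mem_biUnion.mpr ⟨f, by simpa [F] using hf, mem_filter.mpr ⟨mem_univ _, ?_, hcard⟩⟩
        intro p hp
        simpa using hfS p.1 (mem_filter.mp hp).2
    _ ≤ ∑ f ∈ F, #{S | rowPositions f ⊆ S ∧ #S = ε} := card_biUnion_le
    _ ≤ ∑ _f ∈ F, (card α * card β - card α * (t + 1)).choose (ε - card α * (t + 1)) := by
        refine sum_le_sum fun f hf => ?_
        have hfcard : #(rowPositions f) = card α * (t + 1) := by simp_all [F, card_rowPositions]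
        simpa [hfcard] using card_filter_superset_card_eq_le (rowPositions f) ε
    _ = _ := by simp [F, card_piFinset]

theorem card_filter_col_weight_le [DecidableEq α] [DecidableEq β] (t ε : ℕ) :
    #{S : Finset (α × β) | #S = ε ∧ ∀ b, t + 1 ≤ #{a | (a, b) ∈ S}} ≤
      (card α).choose (t + 1) ^ card β *
        (card α * card β - card β * (t + 1)).choose (ε - card β * (t + 1)) := by
  rw [mul_comm (card α)]
  exact le_trans (card_le_card_of_injOn (·.map (Equiv.prodComm α β).toEmbedding)
    (fun S hS => by simpa using hS) (map_injective _).injOn) (card_filter_row_weight_le t ε)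

theorem ZMod.two_eq_of_eq_one_iff {x y : ZMod 2} (h : x = 1 ↔ y = 1) : x = y := by
  revert x y; decide

theorem Matrix.filter_eq_one_injective [DecidableEq α] [DecidableEq β] :
    Function.Injective fun E : Matrix α β (ZMod 2) => ({p | E p.1 p.2 = 1} : Finset (α × β)) :=
  fun E E' h => Matrix.ext fun i j =>
    ZMod.two_eq_of_eq_one_iff (by simpa using congrArg ((i, j) ∈ ·) h)

theorem stall_pattern_count_upper_bound_general (t K L ε : ℕ) :
    (Finset.univ.filter fun E : Matrix (Fin K) (Fin L) (ZMod 2) =>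
        (Finset.univ.filter fun p : Fin K × Fin L => E p.1 p.2 = 1).card = ε ∧
        (∀ i : Fin K, t + 1 ≤ (Finset.univ.filter fun j : Fin L => E i j = 1).card) ∧
        (∀ j : Fin L, t + 1 ≤ (Finset.univ.filter fun i : Fin K => E i j = 1).card)).card
      ≤ Nat.choose (min K L) (t + 1) ^ max K L *
          Nat.choose (K * L - max K L * (t + 1)) (ε - max K L * (t + 1)) := by
  calc _ ≤ #{S : Finset (Fin K × Fin L) | #S = ε ∧ (∀ i, t + 1 ≤ #{j | (i, j) ∈ S}) ∧
          ∀ j, t + 1 ≤ #{i | (i, j) ∈ S}} :=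
        card_le_card_of_injOn _ (fun E hE => by simpa using hE)
          Matrix.filter_eq_one_injective.injOn
    _ ≤ _ := by
      rcases le_total L K with h | h
      · rw [max_eq_left h, min_eq_right h]
        refine (card_le_card fun S hS => ?_).trans ((card_filter_row_weight_le t ε).trans_eq ?_)
        · simp only [mem_filter] at hS ⊢
          exact ⟨hS.1, hS.2.1, hS.2.2.1⟩
        · simp
      · rw [max_eq_right h, min_eq_left h]
        refine (card_le_card fun S hS => ?_).trans ((card_filter_col_weight_le t ε).trans_eq ?_)
        · simp only [mem_filter] at hS ⊢
          exact ⟨hS.1, hS.2.1, hS.2.2.2⟩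
        · simp

/-- The number of `(K,L)` stall patterns of weight `ε` (binary `K×L` matrices of weight
`ε` with every row and column weight at least `t+1`) is at most
`C(min{K,L}, t+1)^{max{K,L}} · C(K·L - max{K,L}·(t+1), ε - max{K,L}·(t+1))`. -/
theorem stall_pattern_count_upper_bound (t K L ε : ℕ)
    (hK : t + 1 ≤ K) (hL : t + 1 ≤ L)
    (hlo : max K L * (t + 1) ≤ ε) (hhi : ε ≤ K * L) :
    (Finset.univ.filter fun E : Matrix (Fin K) (Fin L) (ZMod 2) =>
        (Finset.univ.filter fun p : Fin K × Fin L => E p.1 p.2 = 1).card = ε ∧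
        (∀ i : Fin K, t + 1 ≤ (Finset.univ.filter fun j : Fin L => E i j = 1).card) ∧
        (∀ j : Fin L, t + 1 ≤ (Finset.univ.filter fun i : Fin K => E i j = 1).card)).card
      ≤ Nat.choose (min K L) (t + 1) ^ max K L *
          Nat.choose (K * L - max K L * (t + 1)) (ε - max K L * (t + 1)) :=
  stall_pattern_count_upper_bound_general t K L ε
end

section
/- Let d_min be the minimum distance of the binary component code C of a staircase code. Then any two distinct semi-infinite staircase codewords differ in at least d_min^2 positions, i.e., the minimum distance of the staircase code is at least d_min^2. -/
/-!
The difference `D` of two distinct staircase codewords is a nonzero staircase codeword; let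
`D (i + 1)` be its first nonzero block. As `D i = 0`, a nonzero row of `D (i + 1)` is by itself a
codeword, so `D (i + 1)` has at least `dmin` nonzero columns. For each such column `c`, row `c` of
`[D (i + 1)ᵀ  D (i + 2)]` is a nonzero codeword, so column `c` of `D (i + 1)` and row `c` of
`D (i + 2)` together hold at least `dmin` nonzero entries. Summing over the nonzero columns gives
`dmin ^ 2` nonzero entries in these two blocks.
-/

open Finset Matrix

variable {R ι : Type*}

theorem hammingNorm_sumElim [Zero R] [DecidableEq R] {α β : Type*} [Fintype α] [Fintype β]
    (f : α → R) (g : β → R) :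
    hammingNorm (Sum.elim f g) = hammingNorm f + hammingNorm g := by
  simp only [hammingNorm, card_filter, Fintype.sum_sum_type, Sum.elim_inl, Sum.elim_inr]
  rfl

theorem Matrix.sum_hammingNorm_transpose [Zero R] [DecidableEq R] [Fintype ι] {κ : Type*}
    [Fintype κ] (A : Matrix ι κ R) :
    ∑ c, hammingNorm (Aᵀ c) = ∑ r, hammingNorm (A r) := by
  simp only [hammingNorm, card_filter]
  exact sum_comm

def staircaseRow (B : ℕ → Matrix ι ι R) (i : ℕ) (r : ι) : ι ⊕ ι → R :=
  Sum.elim ((B i)ᵀ r) (B (i + 1) r)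

def IsStaircase [Semiring R] (C : Submodule R (ι ⊕ ι → R)) (B : ℕ → Matrix ι ι R) :
    Prop :=
  ∀ i r, staircaseRow B i r ∈ C

theorem IsStaircase.sub [Ring R] {C : Submodule R (ι ⊕ ι → R)} {B B' : ℕ → Matrix ι ι R}
    (hB : IsStaircase C B) (hB' : IsStaircase C B') : IsStaircase C (B - B') := by
  intro i r
  convert sub_mem (hB i r) (hB' i r) using 1
  ext (j | j) <;> simp [staircaseRow]

theorem exists_eq_zero_succ_ne_zero {M : Type*} [Zero M] {D : ℕ → M} (h0 : D 0 = 0)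
    (hD : D ≠ 0) : ∃ i, D i = 0 ∧ D (i + 1) ≠ 0 := by
  by_contra! h
  refine hD (funext fun n => ?_)
  induction n with
  | zero => exact h0
  | succ n ih => exact h n ih

section MinWeight

variable [Semiring R] [DecidableEq R] [Fintype ι] {C : Submodule R (ι ⊕ ι → R)}
  {dmin : ℕ} (hd : ∀ c ∈ C, c ≠ 0 → dmin ≤ hammingNorm c)
  {D : ℕ → Matrix ι ι R} (hD : IsStaircase C D)
include hd hD

theorem IsStaircase.le_hammingNorm_col_add_row {i : ℕ} {r : ι}
    (hr : staircaseRow D i r ≠ 0) :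
    dmin ≤ hammingNorm ((D i)ᵀ r) + hammingNorm (D (i + 1) r) :=
  hammingNorm_sumElim ((D i)ᵀ r) (D (i + 1) r) ▸ hd _ (hD i r) hr

theorem IsStaircase.le_card_ne_zero_cols {i : ℕ} (h0 : D i = 0) (h1 : D (i + 1) ≠ 0) :
    dmin ≤ #{c | ∃ r, D (i + 1) r c ≠ 0} := by
  obtain ⟨r, hr⟩ := Function.ne_iff.mp h1
  have hrow : staircaseRow D i r ≠ 0 := fun h => hr (funext fun j => congrFun h (.inr j))
  have hw := hD.le_hammingNorm_col_add_row hd hrow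
  rw [hammingNorm_eq_zero.mpr (by rw [h0]; rfl), zero_add] at hw
  refine hw.trans (card_le_card fun c hc => ?_)
  simp only [mem_filter, mem_univ, true_and] at hc ⊢
  exact ⟨r, hc⟩

theorem IsStaircase.sq_le_sum_hammingNorm_two_blocks {i : ℕ} (h0 : D i = 0)
    (h1 : D (i + 1) ≠ 0) :
    dmin ^ 2 ≤ ∑ r, hammingNorm (D (i + 1) r) + ∑ r, hammingNorm (D (i + 2) r) := by
  set cols := ({c | ∃ r, D (i + 1) r c ≠ 0} : Finset ι)
  calc dmin ^ 2 ≤ #cols * dmin := by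
        rw [sq]; exact Nat.mul_le_mul_right _ (hD.le_card_ne_zero_cols hd h0 h1)
    _ = ∑ _c ∈ cols, dmin := by rw [sum_const, smul_eq_mul]
    _ ≤ ∑ c ∈ cols, (hammingNorm ((D (i + 1))ᵀ c) + hammingNorm (D (i + 2) c)) := by
        refine sum_le_sum fun c hc => hD.le_hammingNorm_col_add_row hd fun h => ?_
        obtain ⟨r, hr⟩ := (mem_filter.mp hc).2
        exact hr (congrFun h (.inl r))
    _ ≤ ∑ c, (hammingNorm ((D (i + 1))ᵀ c) + hammingNorm (D (i + 2) c)) :=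
        sum_le_sum_of_subset (subset_univ _)
    _ = _ := by rw [sum_add_distrib, Matrix.sum_hammingNorm_transpose]

end MinWeight

theorem card_filter_ne_zero_prod [Zero R] [DecidableEq R] [Fintype ι] (D : ℕ → Matrix ι ι R)
    (s : Finset ℕ) :
    #{p ∈ s ×ˢ (univ : Finset (ι × ι)) | D p.1 p.2.1 p.2.2 ≠ 0}
      = ∑ i ∈ s, ∑ r, hammingNorm (D i r) := by
  simp only [hammingNorm, card_filter, sum_product, Fintype.sum_prod_type]

/-- Let `C` be a linear component code of length `2m` with minimum distance `dmin`
(every nonzero codeword has weight at least `dmin`). A semi-infinite staircase codeword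
is a sequence of `m×m` blocks `B 0, B 1, …` with `B 0 = 0` such that for each `i ≥ 1`
every row of `[B_{i-1}ᵀ  B_i]` lies in `C`. Then any two distinct staircase codewords
differ in at least `dmin^2` positions: the staircase code has minimum distance at least
`dmin^2`. -/
theorem staircase_min_distance (m dmin : ℕ)
    (C : Submodule (ZMod 2) ((Fin m ⊕ Fin m) → ZMod 2))
    (hd : ∀ c ∈ C, c ≠ 0 → dmin ≤ (Finset.univ.filter fun x => c x ≠ 0).card)
    (B B' : ℕ → Matrix (Fin m) (Fin m) (ZMod 2))
    (hB0 : B 0 = 0) (hB'0 : B' 0 = 0)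
    (hB : ∀ i : ℕ, 1 ≤ i → ∀ r : Fin m,
      (Sum.elim (fun j => B (i - 1) j r) (fun j => B i r j)) ∈ C)
    (hB' : ∀ i : ℕ, 1 ≤ i → ∀ r : Fin m,
      (Sum.elim (fun j => B' (i - 1) j r) (fun j => B' i r j)) ∈ C)
    (hne : B ≠ B') :
    ∃ S : Finset (ℕ × Fin m × Fin m),
      dmin ^ 2 ≤ S.card ∧
      ∀ p ∈ S, B p.1 p.2.1 p.2.2 ≠ B' p.1 p.2.1 p.2.2 := by
  have hD : IsStaircase C (B - B') :=
    IsStaircase.sub (fun i => hB (i + 1) i.succ_pos) (fun i => hB' (i + 1) i.succ_pos)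
  obtain ⟨i, h0, h1⟩ := exists_eq_zero_succ_ne_zero (D := B - B')
    (by rw [Pi.sub_apply, hB0, hB'0, sub_zero]) (sub_ne_zero.mpr hne)
  refine ⟨{p ∈ {i + 1, i + 2} ×ˢ (univ : Finset (Fin m × Fin m)) |
      (B - B') p.1 p.2.1 p.2.2 ≠ 0}, ?_, fun p hp => sub_ne_zero.mp (mem_filter.mp hp).2⟩
  rw [card_filter_ne_zero_prod, sum_pair (by omega)]
  exact hD.sq_le_sum_hammingNorm_two_blocks hd h0 h1
end
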